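/- arXiv:2210.00900 — 6 statements merged into one kernel-verified Lean document; each statement's English description precedes it below -/
import Mathlib

section
/- If (V,g,R) is M-projectively flat (W = 0), then R has the constant-curvature form: R(x,y,z,w) = (Scal/12)·[g(x,w)g(y,z) − g(x,z)g(y,w)] for all x,y,z,w in V. -/
/-- The Ricci tensor of a quadrilinear curvature tensor `R` on a real vector
space, computed with respect to a `g`-orthonormal basis `e` with signs `ε`:
`Ric(x,y) = Σ_a ε_a R(e_a, x, y, e_a)`. -/
noncomputable def ricci {V : Type*} [AddCommGroup V] [Module ℝ V]
    (R : V →ₗ[ℝ] V →ₗ[ℝ] V →ₗ[ℝ] V →ₗ[ℝ] ℝ) (e : Fin 4 → V) (ε : Fin 4 → ℝ)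
    (x y : V) : ℝ :=
  ∑ a, ε a * R (e a) x y (e a)

/-- The scalar curvature `Scal = Σ_a ε_a Ric(e_a, e_a)`. -/
noncomputable def scalarCurv {V : Type*} [AddCommGroup V] [Module ℝ V]
    (R : V →ₗ[ℝ] V →ₗ[ℝ] V →ₗ[ℝ] V →ₗ[ℝ] ℝ) (e : Fin 4 → V) (ε : Fin 4 → ℝ) : ℝ :=
  ∑ a, ε a * ricci R e ε (e a) (e a)

/-- The M-projective curvature tensor
`W(x,y,z,w) = R(x,y,z,w) + (1/6)[g(x,z)Ric(y,w) − g(x,w)Ric(y,z)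
  + Ric(x,z)g(y,w) − Ric(x,w)g(y,z)]`. -/
noncomputable def mProj {V : Type*} [AddCommGroup V] [Module ℝ V]
    (g : V →ₗ[ℝ] V →ₗ[ℝ] ℝ)
    (R : V →ₗ[ℝ] V →ₗ[ℝ] V →ₗ[ℝ] V →ₗ[ℝ] ℝ) (e : Fin 4 → V) (ε : Fin 4 → ℝ)
    (x y z w : V) : ℝ :=
  R x y z w + (1 / 6) * (g x z * ricci R e ε y w - g x w * ricci R e ε y z
    + ricci R e ε x z * g y w - ricci R e ε x w * g y z)

/-- If `(V,g,R)` is M-projectively flat (`W = 0`), then `R` has the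
constant-curvature form `R(x,y,z,w) = (Scal/12)·[g(x,w)g(y,z) − g(x,z)g(y,w)]`. -/
theorem mProjFlat_constantCurvature
    {V : Type*} [AddCommGroup V] [Module ℝ V] [FiniteDimensional ℝ V]
    (hdim : Module.finrank ℝ V = 4)
    (g : V →ₗ[ℝ] V →ₗ[ℝ] ℝ)
    (hg_symm : ∀ x y, g x y = g y x)
    (hg_nondeg : ∀ x, (∀ y, g x y = 0) → x = 0)
    (R : V →ₗ[ℝ] V →ₗ[ℝ] V →ₗ[ℝ] V →ₗ[ℝ] ℝ)
    (hR_skew₁ : ∀ x y z w, R x y z w = - R y x z w)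
    (hR_skew₂ : ∀ x y z w, R x y z w = - R x y w z)
    (hR_pair : ∀ x y z w, R x y z w = R z w x y)
    (hR_bianchi : ∀ x y z w, R x y z w + R y z x w + R z x y w = 0)
    (e : Module.Basis (Fin 4) ℝ V) (ε : Fin 4 → ℝ)
    (hε : ∀ a, ε a = 1 ∨ ε a = -1)
    (horth : ∀ a b, g (e a) (e b) = if a = b then ε a else 0)
    (hflat : ∀ x y z w, mProj g R ⇑e ε x y z w = 0) :
    ∀ x y z w, R x y z w
      = (scalarCurv R ⇑e ε / 12) * (g x w * g y z - g x z * g y w) := by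
  have hε2 : ∀ a, ε a * ε a = 1 := by
    intro a; rcases hε a with h | h <;> rw [h] <;> norm_num
  -- expansion of any vector in the basis
  have hexp : ∀ x : V, ∑ a, (ε a * g x (e a)) • e a = x := by
    intro x
    have hco : ∀ b, g x (e b) = e.repr x b * ε b := by
      intro b
      conv_lhs => rw [← e.sum_repr x]
      simp [map_sum, horth, Finset.sum_ite_eq, mul_comm, -Module.Basis.sum_repr]
    conv_rhs => rw [← e.sum_repr x]
    refine Finset.sum_congr rfl fun a _ => ?_
    rw [hco a]
    have := hε2 a
    rw [show ε a * (e.repr x a * ε a) = e.repr x a * (ε a * ε a) by ring, this, mul_one]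
  -- linearity of ricci in each slot
  have L2 : ∀ (c : Fin 4 → ℝ) y, ricci R ⇑e ε (∑ a, c a • e a) y
      = ∑ a, c a * ricci R ⇑e ε (e a) y := by
    intro c y
    simp only [ricci, map_sum, map_smul, LinearMap.sum_apply, LinearMap.smul_apply,
      smul_eq_mul, Finset.mul_sum]
    rw [Finset.sum_comm]
    exact Finset.sum_congr rfl fun a _ => Finset.sum_congr rfl fun b _ => by ring
  have L3 : ∀ x (c : Fin 4 → ℝ), ricci R ⇑e ε x (∑ a, c a • e a)
      = ∑ a, c a * ricci R ⇑e ε x (e a) := by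
    intro x c
    simp only [ricci, map_sum, map_smul, LinearMap.sum_apply, LinearMap.smul_apply,
      smul_eq_mul, Finset.mul_sum]
    rw [Finset.sum_comm]
    exact Finset.sum_congr rfl fun a _ => Finset.sum_congr rfl fun b _ => by ring
  -- flatness pointwise
  have key : ∀ a x y, R (e a) x y (e a) = -(1/6) * (g (e a) y * ricci R ⇑e ε x (e a)
      - ε a * ricci R ⇑e ε x y + ricci R ⇑e ε (e a) y * g x (e a)
      - ricci R ⇑e ε (e a) (e a) * g x y) := by
    intro a x y
    have h := hflat (e a) x y (e a)
    simp only [mProj] at h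
    rw [horth a a, if_pos rfl] at h
    linarith
  -- contracted sums
  have S1 : ∀ x y, ∑ a, ε a * (g (e a) y * ricci R ⇑e ε x (e a)) = ricci R ⇑e ε x y := by
    intro x y
    calc ∑ a, ε a * (g (e a) y * ricci R ⇑e ε x (e a))
        = ∑ a, (ε a * g y (e a)) * ricci R ⇑e ε x (e a) := by
          refine Finset.sum_congr rfl fun a _ => ?_; rw [hg_symm]; ring
      _ = ricci R ⇑e ε x y := by rw [← L3, hexp]
  have S3 : ∀ x y, ∑ a, ε a * (ricci R ⇑e ε (e a) y * g x (e a)) = ricci R ⇑e ε x y := by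
    intro x y
    calc ∑ a, ε a * (ricci R ⇑e ε (e a) y * g x (e a))
        = ∑ a, (ε a * g x (e a)) * ricci R ⇑e ε (e a) y := by
          refine Finset.sum_congr rfl fun a _ => ?_; ring
      _ = ricci R ⇑e ε x y := by rw [← L2, hexp]
  have S2 : ∀ r : ℝ, ∑ a : Fin 4, ε a * (ε a * r) = 4 * r := by
    intro r
    have : ∀ a : Fin 4, ε a * (ε a * r) = r := by
      intro a; rw [← mul_assoc, hε2, one_mul]
    rw [Finset.sum_congr rfl fun a _ => this a, Finset.sum_const, Finset.card_univ]
    simp [Fintype.card_fin]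
  have S4 : ∀ x y, ∑ a, ε a * (ricci R ⇑e ε (e a) (e a) * g x y)
      = scalarCurv R ⇑e ε * g x y := by
    intro x y
    rw [scalarCurv, Finset.sum_mul]
    exact Finset.sum_congr rfl fun a _ => by ring
  -- Ricci is proportional to g
  have hRic : ∀ x y, ricci R ⇑e ε x y = (scalarCurv R ⇑e ε / 4) * g x y := by
    intro x y
    have h0 : ∀ a, ε a * R (e a) x y (e a)
        = -(1/6) * (ε a * (g (e a) y * ricci R ⇑e ε x (e a)))
          + (1/6) * (ε a * (ε a * ricci R ⇑e ε x y))
          - (1/6) * (ε a * (ricci R ⇑e ε (e a) y * g x (e a)))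
          + (1/6) * (ε a * (ricci R ⇑e ε (e a) (e a) * g x y)) := fun a => by
      rw [key a x y]; ring
    have h1 : (∑ a, ε a * R (e a) x y (e a))
        = -(1/6) * ricci R ⇑e ε x y + (1/6) * (4 * ricci R ⇑e ε x y)
          - (1/6) * ricci R ⇑e ε x y + (1/6) * (scalarCurv R ⇑e ε * g x y) := by
      rw [Finset.sum_congr rfl fun a _ => h0 a]
      rw [Finset.sum_add_distrib, Finset.sum_sub_distrib, Finset.sum_add_distrib,
        ← Finset.mul_sum, ← Finset.mul_sum, ← Finset.mul_sum, ← Finset.mul_sum,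
        S1, S2, S3, S4]
    have h2 : ricci R ⇑e ε x y
        = -(1/6) * ricci R ⇑e ε x y + (1/6) * (4 * ricci R ⇑e ε x y)
          - (1/6) * ricci R ⇑e ε x y + (1/6) * (scalarCurv R ⇑e ε * g x y) := h1
    linarith
  intro x y z w
  have h := hflat x y z w
  simp only [mProj] at h
  rw [hRic y w, hRic y z, hRic x z, hRic x w] at h
  have hzw : g x z * g y w = g z x * g w y := by rw [hg_symm x z, hg_symm y w]
  nlinarith [h, hg_symm x z, hg_symm y w]
end

section
/- Every Ricci inheritance in an M-projectively flat spacetime is a conformal motion: let (V,g,R) be M-projectively flat with Scal ≠ 0, let h be a symmetric bilinear form on V (representing the Lie derivative ℒ_ξ g of the metric along a vector field ξ), and suppose the Lie derivative of the Ricci tensor is L = (Scal/4)·h (the Leibniz expansion of ℒ_ξ((Scal/4)g), valid since Scal is constant on an M-projectively flat spacetime). If the Ricci inheritance condition L = 2Ω·Ric holds for a real number Ω, then h = 2Ω·g, i.e., ξ is a conformal motion with conformal function Ω. -/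
section OrthonormalBasis

variable {ι V : Type*} [Fintype ι] [DecidableEq ι] [AddCommGroup V] [Module ℝ V]
  {g : V →ₗ[ℝ] V →ₗ[ℝ] ℝ} {e : Module.Basis ι ℝ V} {ε : ι → ℝ}

theorem apply_basis_left_eq_of_orthonormal
    (horth : ∀ a b, g (e a) (e b) = if a = b then ε a else 0) (a : ι) (y : V) :
    g (e a) y = ε a * e.repr y a := by
  conv_lhs => rw [← e.sum_repr y]
  simp only [map_sum, map_smul, smul_eq_mul, horth, mul_ite, mul_zero, Finset.sum_ite_eq,
    Finset.mem_univ, if_true]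
  exact mul_comm _ _

theorem apply_basis_right_eq_of_orthonormal
    (horth : ∀ a b, g (e a) (e b) = if a = b then ε a else 0) (x : V) (a : ι) :
    g x (e a) = e.repr x a * ε a := by
  conv_lhs => rw [← e.sum_repr x]
  simp only [map_sum, map_smul, LinearMap.sum_apply, LinearMap.smul_apply, smul_eq_mul, horth,
    mul_ite, mul_zero, Finset.sum_ite_eq', Finset.mem_univ, if_true]

end OrthonormalBasis

section Ricci

variable {V : Type*} [AddCommGroup V] [Module ℝ V]
  (R : V →ₗ[ℝ] V →ₗ[ℝ] V →ₗ[ℝ] V →ₗ[ℝ] ℝ) (e : Module.Basis (Fin 4) ℝ V) (ε : Fin 4 → ℝ)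

theorem sum_repr_mul_ricci_left (x y : V) :
    ∑ a, e.repr x a * ricci R e ε (e a) y = ricci R e ε x y := by
  conv_rhs => rw [← e.sum_repr x]
  simp only [ricci, map_sum, map_smul, LinearMap.sum_apply, LinearMap.smul_apply, smul_eq_mul,
    Finset.mul_sum]
  rw [Finset.sum_comm]
  exact Finset.sum_congr rfl fun _ _ => Finset.sum_congr rfl fun _ _ => by ring

theorem sum_repr_mul_ricci_right (x y : V) :
    ∑ a, e.repr y a * ricci R e ε x (e a) = ricci R e ε x y := by
  conv_rhs => rw [← e.sum_repr y]
  simp only [ricci, map_sum, map_smul, LinearMap.sum_apply, LinearMap.smul_apply, smul_eq_mul,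
    Finset.mul_sum]
  rw [Finset.sum_comm]
  exact Finset.sum_congr rfl fun _ _ => Finset.sum_congr rfl fun _ _ => by ring

variable {R e ε} {g : V →ₗ[ℝ] V →ₗ[ℝ] ℝ}

theorem sum_mul_mProj_basis_basis (hε : ∀ a, ε a * ε a = 1)
    (horth : ∀ a b, g (e a) (e b) = if a = b then ε a else 0) (x y : V) :
    ∑ a, ε a * mProj g R e ε (e a) x y (e a)
      = 2 / 3 * ricci R e ε x y - 1 / 6 * scalarCurv R e ε * g x y := by
  have hterm : ∀ a, ε a * mProj g R e ε (e a) x y (e a)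
      = ε a * R (e a) x y (e a) + 1 / 6 * (e.repr y a * ricci R e ε x (e a) - ricci R e ε x y
        + e.repr x a * ricci R e ε (e a) y - ε a * ricci R e ε (e a) (e a) * g x y) := by
    intro a
    rw [mProj, horth, if_pos rfl, apply_basis_left_eq_of_orthonormal horth,
      apply_basis_right_eq_of_orthonormal horth]
    linear_combination (1 / 6 * e.repr y a * ricci R e ε x (e a) - 1 / 6 * ricci R e ε x y
      + 1 / 6 * e.repr x a * ricci R e ε (e a) y) * hε a
  rw [Finset.sum_congr rfl fun a _ => hterm a]
  simp only [Finset.sum_add_distrib, Finset.sum_sub_distrib, ← Finset.mul_sum, ← Finset.sum_mul,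
    sum_repr_mul_ricci_left, sum_repr_mul_ricci_right, Finset.sum_const, Finset.card_univ,
    Fintype.card_fin, nsmul_eq_mul]
  change ricci R e ε x y + _ = _
  rw [scalarCurv]
  ring

theorem ricci_eq_of_mProj_eq_zero (hε : ∀ a, ε a * ε a = 1)
    (horth : ∀ a b, g (e a) (e b) = if a = b then ε a else 0)
    (hflat : ∀ x y z w, mProj g R e ε x y z w = 0) (x y : V) :
    ricci R e ε x y = scalarCurv R e ε / 4 * g x y := by
  have htrace := sum_mul_mProj_basis_basis (R := R) hε horth x y
  simp only [hflat, mul_zero, Finset.sum_const_zero] at htrace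
  linear_combination -(3 / 2) * htrace

end Ricci

theorem ricciInheritance_isConformalMotion_of_mProjFlat_general
    {V : Type*} [AddCommGroup V] [Module ℝ V]
    (g : V →ₗ[ℝ] V →ₗ[ℝ] ℝ)
    (R : V →ₗ[ℝ] V →ₗ[ℝ] V →ₗ[ℝ] V →ₗ[ℝ] ℝ)
    (e : Module.Basis (Fin 4) ℝ V) (ε : Fin 4 → ℝ)
    (hε : ∀ a, ε a = 1 ∨ ε a = -1)
    (horth : ∀ a b, g (e a) (e b) = if a = b then ε a else 0)
    (hflat : ∀ x y z w, mProj g R ⇑e ε x y z w = 0)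
    (hScal : scalarCurv R ⇑e ε ≠ 0)
    (h L : V →ₗ[ℝ] V →ₗ[ℝ] ℝ)
    (Ω : ℝ)
    (hLeibniz : ∀ x y, L x y = (scalarCurv R ⇑e ε / 4) * h x y)
    (hinherit : ∀ x y, L x y = 2 * Ω * ricci R ⇑e ε x y) :
    ∀ x y, h x y = 2 * Ω * g x y := by
  have hε_sq : ∀ a, ε a * ε a = 1 := fun a => by rcases hε a with ha | ha <;> simp [ha]
  intro x y
  have hL := hLeibniz x y
  rw [hinherit, ricci_eq_of_mProj_eq_zero hε_sq horth hflat] at hL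
  refine mul_left_cancel₀ (div_ne_zero hScal four_ne_zero : scalarCurv R e ε / 4 ≠ 0) ?_
  linear_combination -hL

/-- Every Ricci inheritance in an M-projectively flat spacetime is
a conformal motion: if `ℒ_ξ Ric = (Scal/4)·ℒ_ξ g` (Leibniz expansion, `Scal`
constant and nonzero) and the Ricci inheritance condition `ℒ_ξ Ric = 2Ω·Ric`
holds, then `ℒ_ξ g = 2Ω·g`. -/
theorem ricciInheritance_isConformalMotion_of_mProjFlat
    {V : Type*} [AddCommGroup V] [Module ℝ V] [FiniteDimensional ℝ V]
    (hdim : Module.finrank ℝ V = 4)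
    (g : V →ₗ[ℝ] V →ₗ[ℝ] ℝ)
    (hg_symm : ∀ x y, g x y = g y x)
    (hg_nondeg : ∀ x, (∀ y, g x y = 0) → x = 0)
    (R : V →ₗ[ℝ] V →ₗ[ℝ] V →ₗ[ℝ] V →ₗ[ℝ] ℝ)
    (hR_skew₁ : ∀ x y z w, R x y z w = - R y x z w)
    (hR_skew₂ : ∀ x y z w, R x y z w = - R x y w z)
    (hR_pair : ∀ x y z w, R x y z w = R z w x y)
    (hR_bianchi : ∀ x y z w, R x y z w + R y z x w + R z x y w = 0)
    (e : Module.Basis (Fin 4) ℝ V) (ε : Fin 4 → ℝ)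
    (hε : ∀ a, ε a = 1 ∨ ε a = -1)
    (horth : ∀ a b, g (e a) (e b) = if a = b then ε a else 0)
    (hflat : ∀ x y z w, mProj g R ⇑e ε x y z w = 0)
    (hScal : scalarCurv R ⇑e ε ≠ 0)
    (h L : V →ₗ[ℝ] V →ₗ[ℝ] ℝ)
    (hh_symm : ∀ x y, h x y = h y x)
    (Ω : ℝ)
    (hLeibniz : ∀ x y, L x y = (scalarCurv R ⇑e ε / 4) * h x y)
    (hinherit : ∀ x y, L x y = 2 * Ω * ricci R ⇑e ε x y) :
    ∀ x y, h x y = 2 * Ω * g x y :=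
  ricciInheritance_isConformalMotion_of_mProjFlat_general g R e ε hε horth hflat hScal h L Ω
    hLeibniz hinherit
end

section
/- In an M-projectively flat spacetime, the energy-momentum tensor obeying the Einstein field equations with a cosmological term is proportional to the metric: if (V,g,R) is M-projectively flat and a symmetric bilinear form T on V satisfies Ric − (Scal/2)·g + Λ·g = κ·T with κ ≠ 0, then T = (1/κ)·(Λ − Scal/4)·g. -/
/-!
Contracting the flatness condition `W = 0` over its first and last slots, using a
`g`-orthonormal basis, gives `(2/3) Ric = (Scal/6) g` in dimension four, so the spacetime is
Einstein with `Ric = (Scal/4) g`. Substituting this into the field equations leaves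
`κ T = (Λ - Scal/4) g`.
-/

open Module

section OrthonormalBasis

variable {ι V : Type*} [Fintype ι] [AddCommGroup V] [Module ℝ V]
  {g : V →ₗ[ℝ] V →ₗ[ℝ] ℝ} {e : Basis ι ℝ V} {ε : ι → ℝ}

theorem apply_basis_eq_mul_repr [DecidableEq ι]
    (horth : ∀ a b, g (e a) (e b) = if a = b then ε a else 0) (a : ι) (v : V) :
    g (e a) v = ε a * e.repr v a := by
  calc g (e a) v = g (e a) (∑ b, e.repr v b • e b) := by rw [e.sum_repr]
    _ = ε a * e.repr v a := by
      simp only [map_sum, map_smul, smul_eq_mul, horth, mul_ite, mul_zero, Finset.sum_ite_eq,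
        Finset.mem_univ, if_true]
      exact mul_comm _ _

theorem sum_sign_mul_apply_basis_mul_eq [DecidableEq ι]
    (horth : ∀ a b, g (e a) (e b) = if a = b then ε a else 0) (hε : ∀ a, ε a * ε a = 1)
    (F : V →ₗ[ℝ] ℝ) (v : V) :
    ∑ a, ε a * g (e a) v * F (e a) = F v := by
  conv_rhs => rw [← e.sum_repr v]
  simp only [map_sum, map_smul, smul_eq_mul, apply_basis_eq_mul_repr horth, ← mul_assoc, hε,
    one_mul]

end OrthonormalBasis

noncomputable def ricciForm {V : Type*} [AddCommGroup V] [Module ℝ V]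
    (R : V →ₗ[ℝ] V →ₗ[ℝ] V →ₗ[ℝ] V →ₗ[ℝ] ℝ) (e : Fin 4 → V) (ε : Fin 4 → ℝ) :
    V →ₗ[ℝ] V →ₗ[ℝ] ℝ :=
  ∑ a, ε a • (R (e a)).compr₂ (LinearMap.applyₗ (e a))

@[simp]
theorem ricciForm_apply {V : Type*} [AddCommGroup V] [Module ℝ V]
    (R : V →ₗ[ℝ] V →ₗ[ℝ] V →ₗ[ℝ] V →ₗ[ℝ] ℝ) (e : Fin 4 → V) (ε : Fin 4 → ℝ) (x y : V) :
    ricciForm R e ε x y = ricci R e ε x y := by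
  simp [ricciForm, ricci]

section MProjFlat

variable {V : Type*} [AddCommGroup V] [Module ℝ V] {R : V →ₗ[ℝ] V →ₗ[ℝ] V →ₗ[ℝ] V →ₗ[ℝ] ℝ}
  {g : V →ₗ[ℝ] V →ₗ[ℝ] ℝ} {e : Basis (Fin 4) ℝ V} {ε : Fin 4 → ℝ}

theorem sum_sign_mul_mProj_eq (hg_symm : ∀ x y, g x y = g y x)
    (horth : ∀ a b, g (e a) (e b) = if a = b then ε a else 0) (hε : ∀ a, ε a * ε a = 1)
    (u v : V) :
    ∑ a, ε a * mProj g R e ε (e a) u v (e a)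
      = 2 / 3 * ricci R e ε u v - scalarCurv R e ε / 6 * g u v := by
  have hRic_right : ∑ a, ε a * g (e a) v * ricci R e ε u (e a) = ricci R e ε u v := by
    simpa using sum_sign_mul_apply_basis_mul_eq horth hε (ricciForm R e ε u) v
  have hRic_left : ∑ a, ε a * g (e a) u * ricci R e ε (e a) v = ricci R e ε u v := by
    simpa using sum_sign_mul_apply_basis_mul_eq horth hε ((ricciForm R e ε).flip v) u
  have hterm : ∀ a, ε a * mProj g R e ε (e a) u v (e a)
      = ε a * R (e a) u v (e a) + 1 / 6 * (ε a * g (e a) v * ricci R e ε u (e a))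
        - 1 / 6 * ricci R e ε u v * (ε a * ε a)
        + 1 / 6 * (ε a * g (e a) u * ricci R e ε (e a) v)
        - 1 / 6 * g u v * (ε a * ricci R e ε (e a) (e a)) := by
    intro a
    simp only [mProj, horth, if_pos, hg_symm u (e a)]
    ring
  simp only [hterm, Finset.sum_add_distrib, Finset.sum_sub_distrib, ← Finset.mul_sum, hε,
    hRic_right, hRic_left]
  simp only [ricci, scalarCurv, Finset.sum_const, Finset.card_univ, Fintype.card_fin]
  ring

theorem ricci_eq_of_mProjFlat (hg_symm : ∀ x y, g x y = g y x)
    (horth : ∀ a b, g (e a) (e b) = if a = b then ε a else 0) (hε : ∀ a, ε a * ε a = 1)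
    (hflat : ∀ x y z w, mProj g R e ε x y z w = 0) (u v : V) :
    ricci R e ε u v = scalarCurv R e ε / 4 * g u v := by
  have h := sum_sign_mul_mProj_eq (R := R) hg_symm horth hε u v
  simp only [hflat, mul_zero, Finset.sum_const_zero] at h
  linarith

end MProjFlat

theorem energyMomentum_of_mProjFlat_general
    {V : Type*} [AddCommGroup V] [Module ℝ V]
    (g : V →ₗ[ℝ] V →ₗ[ℝ] ℝ)
    (hg_symm : ∀ x y, g x y = g y x)
    (R : V →ₗ[ℝ] V →ₗ[ℝ] V →ₗ[ℝ] V →ₗ[ℝ] ℝ)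
    (e : Module.Basis (Fin 4) ℝ V) (ε : Fin 4 → ℝ)
    (hε : ∀ a, ε a = 1 ∨ ε a = -1)
    (horth : ∀ a b, g (e a) (e b) = if a = b then ε a else 0)
    (hflat : ∀ x y z w, mProj g R ⇑e ε x y z w = 0)
    (T : V →ₗ[ℝ] V →ₗ[ℝ] ℝ) (Λ κ : ℝ) (hκ : κ ≠ 0)
    (hEFE : ∀ x y, ricci R ⇑e ε x y - (scalarCurv R ⇑e ε / 2) * g x y + Λ * g x y
      = κ * T x y) :
    ∀ x y, T x y = (1 / κ) * (Λ - scalarCurv R ⇑e ε / 4) * g x y := by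
  intro x y
  have hEinstein := ricci_eq_of_mProjFlat hg_symm horth (fun a ↦ mul_self_eq_one_iff.mpr (hε a))
    hflat x y
  have h := hEFE x y
  rw [hEinstein] at h
  field_simp
  linarith

/-- In an M-projectively flat spacetime, the energy-momentum tensor
obeying the Einstein field equations with a cosmological term is proportional to
the metric: `T = (1/κ)·(Λ − Scal/4)·g`. -/
theorem energyMomentum_of_mProjFlat
    {V : Type*} [AddCommGroup V] [Module ℝ V] [FiniteDimensional ℝ V]
    (hdim : Module.finrank ℝ V = 4)
    (g : V →ₗ[ℝ] V →ₗ[ℝ] ℝ)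
    (hg_symm : ∀ x y, g x y = g y x)
    (hg_nondeg : ∀ x, (∀ y, g x y = 0) → x = 0)
    (R : V →ₗ[ℝ] V →ₗ[ℝ] V →ₗ[ℝ] V →ₗ[ℝ] ℝ)
    (hR_skew₁ : ∀ x y z w, R x y z w = - R y x z w)
    (hR_skew₂ : ∀ x y z w, R x y z w = - R x y w z)
    (hR_pair : ∀ x y z w, R x y z w = R z w x y)
    (hR_bianchi : ∀ x y z w, R x y z w + R y z x w + R z x y w = 0)
    (e : Module.Basis (Fin 4) ℝ V) (ε : Fin 4 → ℝ)
    (hε : ∀ a, ε a = 1 ∨ ε a = -1)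
    (horth : ∀ a b, g (e a) (e b) = if a = b then ε a else 0)
    (hflat : ∀ x y z w, mProj g R ⇑e ε x y z w = 0)
    (T : V →ₗ[ℝ] V →ₗ[ℝ] ℝ) (Λ κ : ℝ) (hκ : κ ≠ 0)
    (hEFE : ∀ x y, ricci R ⇑e ε x y - (scalarCurv R ⇑e ε / 2) * g x y + Λ * g x y
      = κ * T x y) :
    ∀ x y, T x y = (1 / κ) * (Λ - scalarCurv R ⇑e ε / 4) * g x y :=
  energyMomentum_of_mProjFlat_general g hg_symm R e ε hε horth hflat T Λ κ hκ hEFE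
end

section
/- If the curvature tensor admits curvature inheritance along a Killing vector field, then the M-projective curvature tensor follows the symmetry inheritance property: if D𝑅 = 2Ω·𝑅, DRic = 2Ω·Ric, Dg = 0 and Dric = 2Ω·ric (curvature inheritance with inheritance function Ω along a Killing vector field ξ), then DW = 2Ω·W. -/
/-- If the curvature tensor admits curvature inheritance along a
Killing vector field (`ℒ_ξ 𝑅 = 2Ω·𝑅`, `ℒ_ξ Ric = 2Ω·Ric`, `ℒ_ξ g = 0`,
`ℒ_ξ ric = 2Ω·ric`), then the M-projective curvature tensor
`W(u,v,w) = 𝑅(u,v,w) + (1/6)[Ric(u,w)·v − Ric(u,v)·w + g(u,w)·ric(v) − g(u,v)·ric(w)]`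
follows the symmetry inheritance property `ℒ_ξ W = 2Ω·W`, where `ℒ_ξ W` is given
by the Leibniz expansion. -/
theorem mProj_inheritance_along_killing
    {V : Type*} [AddCommGroup V] [Module ℝ V] [FiniteDimensional ℝ V]
    (hdim : Module.finrank ℝ V = 4)
    (g : V →ₗ[ℝ] V →ₗ[ℝ] ℝ)
    (hg_symm : ∀ x y, g x y = g y x)
    (hg_nondeg : ∀ x, (∀ y, g x y = 0) → x = 0)
    (Rm DRm : V →ₗ[ℝ] V →ₗ[ℝ] V →ₗ[ℝ] V)
    (Ric DRic Dg : V →ₗ[ℝ] V →ₗ[ℝ] ℝ)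
    (ric Dric : V →ₗ[ℝ] V)
    (hRic_symm : ∀ x y, Ric x y = Ric y x)
    (hric : ∀ u v, g (ric u) v = Ric u v)
    (Ω : ℝ)
    (hDRm : ∀ u v w, DRm u v w = (2 * Ω) • Rm u v w)
    (hDRic : ∀ u v, DRic u v = 2 * Ω * Ric u v)
    (hDg : ∀ u v, Dg u v = 0)
    (hDric : ∀ u, Dric u = (2 * Ω) • ric u) :
    ∀ u v w,
      DRm u v w + ((1 : ℝ) / 6) • (DRic u w • v - DRic u v • w
          + Dg u w • ric v + g u w • Dric v - Dg u v • ric w - g u v • Dric w)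
        = (2 * Ω) • (Rm u v w + ((1 : ℝ) / 6) • (Ric u w • v - Ric u v • w
          + g u w • ric v - g u v • ric w)) := by
  intro u v w
  rw [hDRm, hDRic, hDRic, hDg, hDg, hDric, hDric]
  module
end

section
/- If the curvature tensor admits curvature inheritance along a conformal Killing vector field, then the M-projective curvature tensor follows the symmetry inheritance property: if D𝑅 = 2Ω·𝑅, DRic = 2Ω·Ric, Dg = 2Ψ·g and Dric = (2Ω − 2Ψ)·ric (curvature inheritance with inheritance function Ω along a conformal Killing vector field ξ with conformal function Ψ), then DW = 2Ω·W. -/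
/-- If the curvature tensor admits curvature inheritance along a
conformal Killing vector field with conformal function `Ψ` (`ℒ_ξ 𝑅 = 2Ω·𝑅`,
`ℒ_ξ Ric = 2Ω·Ric`, `ℒ_ξ g = 2Ψ·g`, `ℒ_ξ ric = (2Ω − 2Ψ)·ric`), then the
M-projective curvature tensor
`W(u,v,w) = 𝑅(u,v,w) + (1/6)[Ric(u,w)·v − Ric(u,v)·w + g(u,w)·ric(v) − g(u,v)·ric(w)]`
follows the symmetry inheritance property `ℒ_ξ W = 2Ω·W`, where `ℒ_ξ W` is given
by the Leibniz expansion. -/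
theorem mProj_inheritance_along_conformalKilling
    {V : Type*} [AddCommGroup V] [Module ℝ V] [FiniteDimensional ℝ V]
    (hdim : Module.finrank ℝ V = 4)
    (g : V →ₗ[ℝ] V →ₗ[ℝ] ℝ)
    (hg_symm : ∀ x y, g x y = g y x)
    (hg_nondeg : ∀ x, (∀ y, g x y = 0) → x = 0)
    (Rm DRm : V →ₗ[ℝ] V →ₗ[ℝ] V →ₗ[ℝ] V)
    (Ric DRic Dg : V →ₗ[ℝ] V →ₗ[ℝ] ℝ)
    (ric Dric : V →ₗ[ℝ] V)
    (hRic_symm : ∀ x y, Ric x y = Ric y x)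
    (hric : ∀ u v, g (ric u) v = Ric u v)
    (Ω Ψ : ℝ)
    (hDRm : ∀ u v w, DRm u v w = (2 * Ω) • Rm u v w)
    (hDRic : ∀ u v, DRic u v = 2 * Ω * Ric u v)
    (hDg : ∀ u v, Dg u v = 2 * Ψ * g u v)
    (hDric : ∀ u, Dric u = (2 * Ω - 2 * Ψ) • ric u) :
    ∀ u v w,
      DRm u v w + ((1 : ℝ) / 6) • (DRic u w • v - DRic u v • w
          + Dg u w • ric v + g u w • Dric v - Dg u v • ric w - g u v • Dric w)
        = (2 * Ω) • (Rm u v w + ((1 : ℝ) / 6) • (Ric u w • v - Ric u v • w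
          + g u w • ric v - g u v • ric w)) := by
  intro u v w
  simp only [hDRm, hDRic, hDg, hDric, smul_sub, smul_add, smul_smul]
  module
end

section
/- In a purely electromagnetic distribution, an M-projectively flat spacetime satisfying the Einstein field equations without a cosmological constant is flat (hence admits no curvature symmetry of general relativity): if (V,g,R) is M-projectively flat (W = 0) and there is a symmetric bilinear form T with Ric − (Scal/2)·g = κ·T, κ ≠ 0, and T = 0, then R(x,y,z,w) = 0 for all x,y,z,w in V. -/
section Curvature

variable {V : Type*} [AddCommGroup V] [Module ℝ V]
  (g : V →ₗ[ℝ] V →ₗ[ℝ] ℝ) (R : V →ₗ[ℝ] V →ₗ[ℝ] V →ₗ[ℝ] V →ₗ[ℝ] ℝ)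
  (e : Fin 4 → V) (ε : Fin 4 → ℝ)

theorem scalarCurv_eq_of_ricci_eq_smul (hε : ∀ a, ε a = 1 ∨ ε a = -1)
    (horth : ∀ a b, g (e a) (e b) = if a = b then ε a else 0) (c : ℝ)
    (hRic : ∀ x y, ricci R e ε x y = c * g x y) :
    scalarCurv R e ε = 4 * c := by
  have hterm : ∀ a, ε a * ricci R e ε (e a) (e a) = c := by
    intro a
    rw [hRic, horth, if_pos rfl]
    rcases hε a with h | h <;> rw [h] <;> ring
  simp only [scalarCurv, hterm, Finset.sum_const, Finset.card_univ, Fintype.card_fin,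
    nsmul_eq_mul]
  norm_num

theorem ricci_eq_zero_of_einstein_eq_zero (hε : ∀ a, ε a = 1 ∨ ε a = -1)
    (horth : ∀ a b, g (e a) (e b) = if a = b then ε a else 0)
    (hvac : ∀ x y, ricci R e ε x y - (scalarCurv R e ε / 2) * g x y = 0) (x y : V) :
    ricci R e ε x y = 0 := by
  have hRic : ∀ x y, ricci R e ε x y = (scalarCurv R e ε / 2) * g x y :=
    fun x y => sub_eq_zero.mp (hvac x y)
  have hScal : scalarCurv R e ε = 0 := by
    have := scalarCurv_eq_of_ricci_eq_smul g R e ε hε horth _ hRic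
    linarith
  rw [hRic, hScal, zero_div, zero_mul]

theorem mProj_eq_of_ricci_eq_zero (hRic : ∀ x y, ricci R e ε x y = 0) (x y z w : V) :
    mProj g R e ε x y z w = R x y z w := by
  simp only [mProj, hRic, mul_zero, zero_mul, sub_zero, add_zero]

end Curvature

theorem mProjFlat_electromagnetic_isFlat_general
    {V : Type*} [AddCommGroup V] [Module ℝ V]
    (g : V →ₗ[ℝ] V →ₗ[ℝ] ℝ)
    (R : V →ₗ[ℝ] V →ₗ[ℝ] V →ₗ[ℝ] V →ₗ[ℝ] ℝ)
    (e : Module.Basis (Fin 4) ℝ V) (ε : Fin 4 → ℝ)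
    (hε : ∀ a, ε a = 1 ∨ ε a = -1)
    (horth : ∀ a b, g (e a) (e b) = if a = b then ε a else 0)
    (hflat : ∀ x y z w, mProj g R ⇑e ε x y z w = 0)
    (T : V →ₗ[ℝ] V →ₗ[ℝ] ℝ) (κ : ℝ)
    (hEFE : ∀ x y, ricci R ⇑e ε x y - (scalarCurv R ⇑e ε / 2) * g x y = κ * T x y)
    (hT : ∀ x y, T x y = 0) :
    ∀ x y z w, R x y z w = 0 := by
  have hvac : ∀ x y, ricci R ⇑e ε x y - (scalarCurv R ⇑e ε / 2) * g x y = 0 := by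
    intro x y
    rw [hEFE, hT, mul_zero]
  have hRic := ricci_eq_zero_of_einstein_eq_zero g R ⇑e ε hε horth hvac
  intro x y z w
  rw [← mProj_eq_of_ricci_eq_zero g R ⇑e ε hRic, hflat]

/-- In a purely electromagnetic distribution, an M-projectively
flat spacetime satisfying the Einstein field equations without a cosmological
constant is flat: if `W = 0`, `Ric − (Scal/2)·g = κ·T` with `κ ≠ 0` and `T = 0`,
then `R = 0`. -/
theorem mProjFlat_electromagnetic_isFlat
    {V : Type*} [AddCommGroup V] [Module ℝ V] [FiniteDimensional ℝ V]
    (hdim : Module.finrank ℝ V = 4)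
    (g : V →ₗ[ℝ] V →ₗ[ℝ] ℝ)
    (hg_symm : ∀ x y, g x y = g y x)
    (hg_nondeg : ∀ x, (∀ y, g x y = 0) → x = 0)
    (R : V →ₗ[ℝ] V →ₗ[ℝ] V →ₗ[ℝ] V →ₗ[ℝ] ℝ)
    (hR_skew₁ : ∀ x y z w, R x y z w = - R y x z w)
    (hR_skew₂ : ∀ x y z w, R x y z w = - R x y w z)
    (hR_pair : ∀ x y z w, R x y z w = R z w x y)
    (hR_bianchi : ∀ x y z w, R x y z w + R y z x w + R z x y w = 0)
    (e : Module.Basis (Fin 4) ℝ V) (ε : Fin 4 → ℝ)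
    (hε : ∀ a, ε a = 1 ∨ ε a = -1)
    (horth : ∀ a b, g (e a) (e b) = if a = b then ε a else 0)
    (hflat : ∀ x y z w, mProj g R ⇑e ε x y z w = 0)
    (T : V →ₗ[ℝ] V →ₗ[ℝ] ℝ) (κ : ℝ) (hκ : κ ≠ 0)
    (hEFE : ∀ x y, ricci R ⇑e ε x y - (scalarCurv R ⇑e ε / 2) * g x y = κ * T x y)
    (hT : ∀ x y, T x y = 0) :
    ∀ x y z w, R x y z w = 0 :=
  mProjFlat_electromagnetic_isFlat_general g R e ε hε horth hflat T κ hEFE hT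
end
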